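/- arXiv:1610.00323 — 7 statements merged into one kernel-verified Lean document; each statement's English description precedes it below -/
import Mathlib

section
/- Let p be a finite subset of Z^2 that is horizontally and vertically convex. If for all cells (x1,y1), (x2,y2) ∈ p we have (x1,y2) ∈ p or (x2,y1) ∈ p, then p is L-convex: any two cells of p are joined by a 4-connected path inside p that changes direction at most once. -/
def Adj (a b : ℤ × ℤ) : Prop := (a.1 - b.1).natAbs + (a.2 - b.2).natAbs = 1

def FourConnected (p : Set (ℤ × ℤ)) : Prop :=
  ∀ c1 ∈ p, ∀ c2 ∈ p, ∃ l : List (ℤ × ℤ),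
    l.head? = some c1 ∧ l.getLast? = some c2 ∧ (∀ c ∈ l, c ∈ p) ∧ l.Chain' Adj

def HConvex (p : Set (ℤ × ℤ)) : Prop :=
  ∀ x1 x2 x3 y : ℤ, x1 ≤ x2 → x2 ≤ x3 → (x1, y) ∈ p → (x3, y) ∈ p → (x2, y) ∈ p

def VConvex (p : Set (ℤ × ℤ)) : Prop :=
  ∀ x y1 y2 y3 : ℤ, y1 ≤ y2 → y2 ≤ y3 → (x, y1) ∈ p → (x, y3) ∈ p → (x, y2) ∈ p

def HSeg (p : Set (ℤ × ℤ)) (x1 x2 y : ℤ) : Prop :=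
  ∀ x : ℤ, min x1 x2 ≤ x → x ≤ max x1 x2 → (x, y) ∈ p

def VSeg (p : Set (ℤ × ℤ)) (x y1 y2 : ℤ) : Prop :=
  ∀ y : ℤ, min y1 y2 ≤ y → y ≤ max y1 y2 → (x, y) ∈ p

/-- An inner path from `c1` to `c2` changing direction at most once:
either a horizontal segment followed by a vertical one, or vice versa,
entirely contained in `p`. -/
def LPath (p : Set (ℤ × ℤ)) (c1 c2 : ℤ × ℤ) : Prop :=
  (HSeg p c1.1 c2.1 c1.2 ∧ VSeg p c2.1 c1.2 c2.2) ∨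
  (VSeg p c1.1 c1.2 c2.2 ∧ HSeg p c1.1 c2.1 c2.2)

def LConvex (p : Set (ℤ × ℤ)) : Prop := ∀ c1 ∈ p, ∀ c2 ∈ p, LPath p c1 c2

def NECorner (p : Set (ℤ × ℤ)) (x y : ℤ) : Prop :=
  (x, y) ∈ p ∧ (x + 1, y) ∉ p ∧ (x, y + 1) ∉ p

def NWCorner (p : Set (ℤ × ℤ)) (x y : ℤ) : Prop :=
  (x, y) ∈ p ∧ (x - 1, y) ∉ p ∧ (x, y + 1) ∉ p

def Corner (p : Set (ℤ × ℤ)) (x y : ℤ) : Prop :=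
  (x, y) ∈ p ∧
    (((x, y + 1) ∉ p ∧ (x + 1, y) ∉ p) ∨ ((x + 1, y) ∉ p ∧ (x, y - 1) ∉ p) ∨
      ((x, y - 1) ∉ p ∧ (x - 1, y) ∉ p) ∨ ((x - 1, y) ∉ p ∧ (x, y + 1) ∉ p))


lemma hseg_of_mem {p : Set (ℤ × ℤ)} (hH : HConvex p) {x1 x2 y : ℤ}
    (h1 : (x1, y) ∈ p) (h2 : (x2, y) ∈ p) : HSeg p x1 x2 y := by
  intro x hmin hmax
  rcases le_total x1 x2 with h | h
  · exact hH x1 x x2 y (by simpa [min_eq_left h] using hmin) (by simpa [max_eq_right h] using hmax) h1 h2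
  · exact hH x2 x x1 y (by simpa [min_eq_right h] using hmin) (by simpa [max_eq_left h] using hmax) h2 h1

lemma vseg_of_mem {p : Set (ℤ × ℤ)} (hV : VConvex p) {x y1 y2 : ℤ}
    (h1 : (x, y1) ∈ p) (h2 : (x, y2) ∈ p) : VSeg p x y1 y2 := by
  intro y hmin hmax
  rcases le_total y1 y2 with h | h
  · exact hV x y1 y y2 (by simpa [min_eq_left h] using hmin) (by simpa [max_eq_right h] using hmax) h1 h2
  · exact hV x y2 y y1 (by simpa [min_eq_right h] using hmin) (by simpa [max_eq_left h] using hmax) h2 h1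

/-- HV-convexity together with the angle condition implies L-convexity. -/
theorem hv_angle_imp_lconvex (p : Set (ℤ × ℤ)) (hfin : p.Finite)
    (hH : HConvex p) (hV : VConvex p)
    (hangle : ∀ x1 y1 x2 y2 : ℤ, (x1, y1) ∈ p → (x2, y2) ∈ p →
      (x1, y2) ∈ p ∨ (x2, y1) ∈ p) :
    LConvex p := by
  rintro ⟨x1, y1⟩ h1 ⟨x2, y2⟩ h2
  rcases hangle x1 y1 x2 y2 h1 h2 with h | h
  · exact Or.inr ⟨vseg_of_mem hV h1 h, hseg_of_mem hH h h2⟩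
  · exact Or.inl ⟨hseg_of_mem hH h1 h, vseg_of_mem hV h h2⟩
end

section
/- A finite subset p of Z^2 is L-convex (every two cells joined by an inner path of p changing direction at most once) if and only if p is horizontally convex, vertically convex, and for all (x1,y1), (x2,y2) ∈ p, either (x1,y2) ∈ p or (x2,y1) ∈ p. (Assume p is nonempty and 4-connected, or note that L-convexity of any two cells directly implies 4-connectedness when p is nonempty.) -/
/-- A finite nonempty 4-connected set is L-convex iff it is HV-convex and
satisfies the angle condition. -/
theorem lconvex_iff (p : Set (ℤ × ℤ)) (hfin : p.Finite) (hne : p.Nonempty)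
    (hconn : FourConnected p) :
    LConvex p ↔
      HConvex p ∧ VConvex p ∧
        ∀ x1 y1 x2 y2 : ℤ, (x1, y1) ∈ p → (x2, y2) ∈ p →
          (x1, y2) ∈ p ∨ (x2, y1) ∈ p := by
  constructor
  · intro hL
    refine ⟨?_, ?_, ?_⟩
    · intro x1 x2 x3 y h12 h23 h1 h3
      rcases hL (x1, y) h1 (x3, y) h3 with ⟨hs, _⟩ | ⟨_, hs⟩ <;>
        exact hs x2 (by simp [min_le_iff, h12]) (by simp [le_max_iff, h23])
    · intro x y1 y2 y3 h12 h23 h1 h3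
      rcases hL (x, y1) h1 (x, y3) h3 with ⟨_, hs⟩ | ⟨hs, _⟩ <;>
        exact hs y2 (by simp [min_le_iff, h12]) (by simp [le_max_iff, h23])
    · intro x1 y1 x2 y2 h1 h2
      rcases hL (x1, y1) h1 (x2, y2) h2 with ⟨hs, _⟩ | ⟨hs, _⟩
      · exact Or.inr (hs x2 (min_le_right _ _) (le_max_right _ _))
      · exact Or.inl (hs y2 (min_le_right _ _) (le_max_right _ _))
  · rintro ⟨hH, hV, hAng⟩ ⟨x1, y1⟩ h1 ⟨x2, y2⟩ h2
    rcases hAng x1 y1 x2 y2 h1 h2 with h | h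
    · exact Or.inr ⟨vseg_of_mem hV h1 h, hseg_of_mem hH h h2⟩
    · exact Or.inl ⟨hseg_of_mem hH h1 h, vseg_of_mem hV h h2⟩
end

section
/- Let p ⊆ Z^2 be a finite, nonempty, 4-connected, horizontally and vertically convex set (an HV-convex polyomino). If p contains a cell (x,y) with x'' > x and y'' < y' for some cell (x'',y'') of p, where (x,y) is a NE corner and (x,y') is the southernmost cell of p in column x, then additionally there is a cell of p either of the form (x'', y'-1) with x'' > x or of the form (x+1, y'') with y'' < y'. -/
open Set

theorem List.IsChain.exists_rel_notMem_mem {α : Type*} {r : α → α → Prop} {s : Set α}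
    {l : List α} (hl : l.IsChain r) {a b : α} (ha : l.head? = some a)
    (hb : l.getLast? = some b) (has : a ∉ s) (hbs : b ∈ s) :
    ∃ u ∈ l, ∃ v ∈ l, u ∉ s ∧ v ∈ s ∧ r u v := by
  by_contra! H
  have hnotMem : ∀ c ∈ l, c ∉ s := by
    refine (List.IsChain.iff_mem.mp hl).induction (· ∉ s) l ?_ ?_
    · rintro u v ⟨hu, hv, huv⟩ hus hvs
      exact H u hu v hv hus hvs huv
    · intro hne
      rwa [(List.head_eq_iff_head?_eq_some hne).mpr ha]
  exact hnotMem b (List.mem_of_getLast? hb) hbs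

theorem Adj.snd_eq_or_fst_eq_of_notMem_of_mem {a b : ℤ × ℤ} (hab : Adj a b) {x y : ℤ}
    (ha : a ∉ Ioi x ×ˢ Iio y) (hb : b ∈ Ioi x ×ˢ Iio y) : b.2 = y - 1 ∨ b.1 = x + 1 := by
  simp only [Adj, mem_prod, mem_Ioi, mem_Iio] at hab ha hb
  omega

theorem forbidden_region_boundary_general (p : Set (ℤ × ℤ))
    (hconn : FourConnected p)
    (x y' : ℤ) (hy' : IsLeast {t : ℤ | (x, t) ∈ p} y')
    (x'' y'' : ℤ) (hc : (x'', y'') ∈ p) (hx : x < x'') (hy : y'' < y') :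
    (∃ s : ℤ, x < s ∧ (s, y' - 1) ∈ p) ∨ (∃ t : ℤ, t < y' ∧ (x + 1, t) ∈ p) := by
  obtain ⟨l, hhead, hlast, hmem, hchain⟩ := hconn _ hy'.1 _ hc
  obtain ⟨a, -, b, hb, ha, hbQ, hab⟩ := List.IsChain.exists_rel_notMem_mem
    (s := Ioi x ×ˢ Iio y') hchain hhead hlast (by simp) ⟨hx, hy⟩
  rcases hab.snd_eq_or_fst_eq_of_notMem_of_mem ha hbQ with h | h
  · exact Or.inl ⟨b.1, hbQ.1, h ▸ hmem b hb⟩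
  · exact Or.inr ⟨b.2, hbQ.2, h ▸ hmem b hb⟩

/-- in an HV-convex polyomino, a cell strictly east of a NE corner's column
and strictly south of row `y'` forces a cell of `p` on row `y' - 1` strictly east of `x`,
or in column `x + 1` strictly south of `y'`. -/
theorem forbidden_region_boundary (p : Set (ℤ × ℤ)) (hfin : p.Finite) (hne : p.Nonempty)
    (hconn : FourConnected p) (hH : HConvex p) (hV : VConvex p)
    (x y y' : ℤ) (hNE : NECorner p x y) (hy' : IsLeast {t : ℤ | (x, t) ∈ p} y')
    (x'' y'' : ℤ) (hc : (x'', y'') ∈ p) (hx : x < x'') (hy : y'' < y') :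
    (∃ s : ℤ, x < s ∧ (s, y' - 1) ∈ p) ∨ (∃ t : ℤ, t < y' ∧ (x + 1, t) ∈ p) :=
  forbidden_region_boundary_general p hconn x y' hy' x'' y'' hc hx hy
end

section
/- Let p be an HV-convex polyomino (finite, nonempty, 4-connected, horizontally and vertically convex subset of Z^2). Then p is L-convex if and only if for every NE corner c = (x,y) of p, letting y' = min{t : (x,t) ∈ p} and x' = min{s : (s,y) ∈ p}, there is no cell (x'',y'') ∈ p satisfying (a) x'' > x and y'' < y', nor (b) x'' < x' and y'' > y, nor (c) x'' < x' and y'' < y', and symmetrically for every NW corner c = (x,y) of p, letting y' = min{t : (x,t) ∈ p} and x' = max{s : (s,y) ∈ p}, there is no cell (x'',y'') ∈ p with (a') x'' < x and y'' < y', nor (b') x'' > x' and y'' > y, nor (c') x'' > x' and y'' < y'. -/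
lemma exists_isLeast_of_finite {s : Set ℤ} (h : s.Finite) (hne : s.Nonempty) :
    ∃ a, IsLeast s a := by
  refine ⟨h.toFinset.min' (by simpa using hne), ?_, ?_⟩
  · have := h.toFinset.min'_mem (by simpa using hne)
    simpa using this
  · intro b hb
    exact Finset.min'_le _ _ (by simpa using hb)

lemma exists_isGreatest_of_finite {s : Set ℤ} (h : s.Finite) (hne : s.Nonempty) :
    ∃ a, IsGreatest s a := by
  refine ⟨h.toFinset.max' (by simpa using hne), ?_, ?_⟩
  · have := h.toFinset.max'_mem (by simpa using hne)
    simpa using this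
  · intro b hb
    exact Finset.le_max' _ _ (by simpa using hb)

lemma col_finite {p : Set (ℤ × ℤ)} (hfin : p.Finite) (x : ℤ) :
    {t : ℤ | (x, t) ∈ p}.Finite := by
  have : {t : ℤ | (x, t) ∈ p} = (fun t : ℤ => ((x, t) : ℤ × ℤ)) ⁻¹' p := rfl
  rw [this]
  exact Set.Finite.preimage (fun a _ b _ hab => by
    simpa using congrArg Prod.snd hab) hfin

lemma row_finite {p : Set (ℤ × ℤ)} (hfin : p.Finite) (y : ℤ) :
    {s : ℤ | (s, y) ∈ p}.Finite := by
  have : {s : ℤ | (s, y) ∈ p} = (fun s : ℤ => ((s, y) : ℤ × ℤ)) ⁻¹' p := rfl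
  rw [this]
  exact Set.Finite.preimage (fun a _ b _ hab => by
    simpa using congrArg Prod.fst hab) hfin

/-- characterization of L-convexity of HV-convex polyominoes via NE and NW corners. -/
theorem lconvex_corner_characterization (p : Set (ℤ × ℤ)) (hfin : p.Finite)
    (hne : p.Nonempty) (hconn : FourConnected p) (hH : HConvex p) (hV : VConvex p) :
    (∀ x1 y1 x2 y2 : ℤ, (x1, y1) ∈ p → (x2, y2) ∈ p →
        (x1, y2) ∈ p ∨ (x2, y1) ∈ p) ↔
      ((∀ x y y' x' : ℤ, NECorner p x y →
          IsLeast {t : ℤ | (x, t) ∈ p} y' → IsLeast {s : ℤ | (s, y) ∈ p} x' →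
          ∀ x'' y'' : ℤ, (x'', y'') ∈ p →
            ¬(x'' > x ∧ y'' < y') ∧ ¬(x'' < x' ∧ y'' > y) ∧ ¬(x'' < x' ∧ y'' < y')) ∧
        (∀ x y y' x' : ℤ, NWCorner p x y →
          IsLeast {t : ℤ | (x, t) ∈ p} y' → IsGreatest {s : ℤ | (s, y) ∈ p} x' →
          ∀ x'' y'' : ℤ, (x'', y'') ∈ p →
            ¬(x'' < x ∧ y'' < y') ∧ ¬(x'' > x' ∧ y'' > y) ∧ ¬(x'' > x' ∧ y'' < y'))) := by
  constructor
  · intro hL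
    constructor
    · rintro x y y' x' ⟨hxy, hR, hT⟩ hy' hx' x'' y'' hc
      refine ⟨?_, ?_, ?_⟩
      · rintro ⟨h1, h2⟩
        rcases hL x y x'' y'' hxy hc with h | h
        · exact absurd (hy'.2 h) (not_le.mpr h2)
        · exact hR (hH x (x + 1) x'' y (by omega) (by omega) hxy h)
      · rintro ⟨h1, h2⟩
        rcases hL x y x'' y'' hxy hc with h | h
        · exact hT (hV x y (y + 1) y'' (by omega) (by omega) hxy h)
        · exact absurd (hx'.2 h) (not_le.mpr h1)
      · rintro ⟨h1, h2⟩
        rcases hL x y x'' y'' hxy hc with h | h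
        · exact absurd (hy'.2 h) (not_le.mpr h2)
        · exact absurd (hx'.2 h) (not_le.mpr h1)
    · rintro x y y' x' ⟨hxy, hLn, hT⟩ hy' hx' x'' y'' hc
      refine ⟨?_, ?_, ?_⟩
      · rintro ⟨h1, h2⟩
        rcases hL x y x'' y'' hxy hc with h | h
        · exact absurd (hy'.2 h) (not_le.mpr h2)
        · exact hLn (hH x'' (x - 1) x y (by omega) (by omega) h hxy)
      · rintro ⟨h1, h2⟩
        rcases hL x y x'' y'' hxy hc with h | h
        · exact hT (hV x y (y + 1) y'' (by omega) (by omega) hxy h)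
        · exact absurd (hx'.2 h) (not_le.mpr h1)
      · rintro ⟨h1, h2⟩
        rcases hL x y x'' y'' hxy hc with h | h
        · exact absurd (hy'.2 h) (not_le.mpr h2)
        · exact absurd (hx'.2 h) (not_le.mpr h1)
  · rintro ⟨hNE, hNW⟩ x1 y1 x2 y2 h1 h2
    by_contra hbad
    push_neg at hbad
    obtain ⟨hb1, hb2⟩ := hbad
    -- set of "top" y-coordinates of bad pairs
    set T : Set ℤ := {b : ℤ | ∃ a a2 b2 : ℤ, (a, b) ∈ p ∧ (a2, b2) ∈ p ∧
      (a, b2) ∉ p ∧ (a2, b) ∉ p ∧ b2 < b} with hT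
    have hTfin : T.Finite := by
      apply Set.Finite.subset (hfin.image Prod.snd)
      rintro b ⟨a, a2, b2, hab, _, _, _, _⟩
      exact ⟨(a, b), hab, rfl⟩
    have hTne : T.Nonempty := by
      rcases lt_trichotomy y1 y2 with h | h | h
      · exact ⟨y2, x2, x1, y1, h2, h1, hb2, hb1, h⟩
      · exact absurd h1 (h ▸ hb1)
      · exact ⟨y1, x1, x2, y2, h1, h2, hb1, hb2, h⟩
    obtain ⟨Y, hYmem, hYub⟩ := exists_isGreatest_of_finite hTfin hTne
    obtain ⟨a, a2, b2, ha, ha2, hn1, hn2, hlt⟩ := hYmem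
    -- row Y
    have hRfin := row_finite hfin Y
    have hRne : {s : ℤ | (s, Y) ∈ p}.Nonempty := ⟨a, ha⟩
    obtain ⟨xl, hxl⟩ := exists_isLeast_of_finite hRfin hRne
    obtain ⟨xr, hxr⟩ := exists_isGreatest_of_finite hRfin hRne
    have hxla : xl ≤ a := hxl.2 ha
    have haxr : a ≤ xr := hxr.2 ha
    have hane : a ≠ a2 := by rintro rfl; exact hn2 ha
    rcases lt_or_gt_of_ne hane with hcase | hcase
    · -- a < a2 : use NW corner at (xl, Y)
      have ha2r : xr < a2 := by
        by_contra h
        exact hn2 (hH xl a2 xr Y (by omega) (by omega) hxl.1 hxr.1)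
      have hxlb2 : (xl, b2) ∉ p := fun h =>
        hn1 (hH xl a a2 b2 hxla (le_of_lt hcase) h ha2)
      have hCfin := col_finite hfin xl
      obtain ⟨yb, hyb⟩ := exists_isLeast_of_finite hCfin ⟨Y, hxl.1⟩
      have hybgt : b2 < yb := by
        by_contra h
        exact hxlb2 (hV xl yb b2 Y (by omega) (by omega) hyb.1 hxl.1)
      have htop : (xl, Y + 1) ∉ p := by
        intro htop
        have : Y + 1 ∈ T := by
          refine ⟨xl, a2, b2, htop, ha2, hxlb2, ?_, by omega⟩
          intro h
          exact hn2 (hV a2 b2 Y (Y + 1) (by omega) (by omega) ha2 h)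
        exact absurd (hYub this) (by omega)
      have hleft : (xl - 1, Y) ∉ p := fun h =>
        absurd (hxl.2 h) (by omega)
      have := hNW xl Y yb xr ⟨hxl.1, hleft, htop⟩ hyb hxr a2 b2 ha2
      exact this.2.2 ⟨ha2r, hybgt⟩
    · -- a2 < a : use NE corner at (xr, Y)
      have ha2l : a2 < xl := by
        by_contra h
        exact hn2 (hH xl a2 xr Y (by omega) (by omega) hxl.1 hxr.1)
      have hxrb2 : (xr, b2) ∉ p := fun h =>
        hn1 (hH a2 a xr b2 (le_of_lt hcase) haxr ha2 h)
      have hCfin := col_finite hfin xr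
      obtain ⟨yb, hyb⟩ := exists_isLeast_of_finite hCfin ⟨Y, hxr.1⟩
      have hybgt : b2 < yb := by
        by_contra h
        exact hxrb2 (hV xr yb b2 Y (by omega) (by omega) hyb.1 hxr.1)
      have htop : (xr, Y + 1) ∉ p := by
        intro htop
        have : Y + 1 ∈ T := by
          refine ⟨xr, a2, b2, htop, ha2, hxrb2, ?_, by omega⟩
          intro h
          exact hn2 (hV a2 b2 Y (Y + 1) (by omega) (by omega) ha2 h)
        exact absurd (hYub this) (by omega)
      have hright : (xr + 1, Y) ∉ p := fun h =>
        absurd (hxr.2 h) (by omega)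
      have := hNE xr Y yb xl ⟨hxr.1, hright, htop⟩ hyb hxl a2 b2 ha2
      exact this.2.2 ⟨ha2l, hybgt⟩
end

section
/- Let p ⊆ Z^2 be finite and nonempty such that each row section {x : (x,y) ∈ p} and each column section {y : (x,y) ∈ p} is an interval, and such that for any two consecutive nonempty rows the corresponding intervals intersect, and the set of nonempty rows forms an interval of Z. Then p is 4-connected. -/
/-!
Consecutive rows overlap, so from any cell one can walk along its row (an interval) to a cell
shared with the next row, step up, and repeat; since the nonempty rows form an interval, this
reaches the row of any target cell, and a last walk along that row ends at the target.
-/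

open Relation

def GridStep (p : Set (ℤ × ℤ)) (a b : ℤ × ℤ) : Prop := a ∈ p ∧ b ∈ p ∧ Adj a b

theorem Adj.symm {a b : ℤ × ℤ} (h : Adj a b) : Adj b a := by
  unfold Adj at *
  omega

instance (p : Set (ℤ × ℤ)) : Std.Symm (GridStep p) where
  symm _ _ h := ⟨h.2.1, h.1, h.2.2.symm⟩

section

variable {p : Set (ℤ × ℤ)}

theorem fourConnected_of_reflTransGen
    (h : ∀ a ∈ p, ∀ b ∈ p, ReflTransGen (GridStep p) a b) : FourConnected p := by
  intro a ha b hb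
  obtain ⟨l, hchain, hlast⟩ := List.exists_isChain_cons_of_relationReflTransGen (h a ha b hb)
  refine ⟨a :: l, rfl, ?_, ?_, hchain.imp fun _ _ hs => hs.2.2⟩
  · rw [List.getLast?_eq_some_getLast (List.cons_ne_nil a l), hlast]
  · exact hchain.induction (· ∈ p) _ (fun _ _ hs _ => hs.2.1) fun _ => ha

theorem reflTransGen_gridStep_of_mem_row (hH : HConvex p) {x₁ x₂ y : ℤ}
    (h₁ : (x₁, y) ∈ p) (h₂ : (x₂, y) ∈ p) : ReflTransGen (GridStep p) (x₁, y) (x₂, y) := by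
  wlog hle : x₁ ≤ x₂ generalizing x₁ x₂
  · exact Std.Symm.symm _ _ (this h₂ h₁ (by omega))
  induction x₂, hle using Int.leInduction with
  | base => exact .refl
  | succ x hx ih =>
    have hx_mem : (x, y) ∈ p := hH x₁ x (x + 1) y hx (by omega) h₁ h₂
    exact (ih hx_mem).tail ⟨hx_mem, h₂, by simp [Adj]⟩

theorem reflTransGen_gridStep_of_rows (hH : HConvex p)
    (hadj : ∀ y : ℤ, (∃ x : ℤ, (x, y) ∈ p) → (∃ x : ℤ, (x, y + 1) ∈ p) →
      ∃ x : ℤ, (x, y) ∈ p ∧ (x, y + 1) ∈ p)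
    (hrows : ∀ y1 y2 y3 : ℤ, y1 ≤ y2 → y2 ≤ y3 →
      (∃ x : ℤ, (x, y1) ∈ p) → (∃ x : ℤ, (x, y3) ∈ p) → ∃ x : ℤ, (x, y2) ∈ p)
    {x₁ y₁ x₂ y₂ : ℤ} (h₁ : (x₁, y₁) ∈ p) (h₂ : (x₂, y₂) ∈ p) :
    ReflTransGen (GridStep p) (x₁, y₁) (x₂, y₂) := by
  wlog hle : y₁ ≤ y₂ generalizing x₁ y₁ x₂ y₂
  · exact Std.Symm.symm _ _ (this h₂ h₁ (by omega))
  induction y₂, hle using Int.leInduction generalizing x₂ with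
  | base => exact reflTransGen_gridStep_of_mem_row hH h₁ h₂
  | succ y hy ih =>
    obtain ⟨x, hx_below, hx_above⟩ :=
      hadj y (hrows y₁ y (y + 1) hy (by omega) ⟨x₁, h₁⟩ ⟨x₂, h₂⟩) ⟨x₂, h₂⟩
    exact ((ih hx_below).tail ⟨hx_below, hx_above, by simp [Adj]⟩).trans
      (reflTransGen_gridStep_of_mem_row hH hx_above h₂)

end

theorem intervals_imp_fourConnected_general (p : Set (ℤ × ℤ))
    (hH : HConvex p)
    (hadj : ∀ y : ℤ, (∃ x : ℤ, (x, y) ∈ p) → (∃ x : ℤ, (x, y + 1) ∈ p) →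
      ∃ x : ℤ, (x, y) ∈ p ∧ (x, y + 1) ∈ p)
    (hrows : ∀ y1 y2 y3 : ℤ, y1 ≤ y2 → y2 ≤ y3 →
      (∃ x : ℤ, (x, y1) ∈ p) → (∃ x : ℤ, (x, y3) ∈ p) → ∃ x : ℤ, (x, y2) ∈ p) :
    FourConnected p :=
  fourConnected_of_reflTransGen fun _ ha _ hb =>
    reflTransGen_gridStep_of_rows hH hadj hrows ha hb

/-- interval rows and columns, overlapping consecutive rows and an interval
of nonempty rows imply 4-connectedness. -/
theorem intervals_imp_fourConnected (p : Set (ℤ × ℤ)) (hfin : p.Finite) (hne : p.Nonempty)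
    (hH : HConvex p) (hV : VConvex p)
    (hadj : ∀ y : ℤ, (∃ x : ℤ, (x, y) ∈ p) → (∃ x : ℤ, (x, y + 1) ∈ p) →
      ∃ x : ℤ, (x, y) ∈ p ∧ (x, y + 1) ∈ p)
    (hrows : ∀ y1 y2 y3 : ℤ, y1 ≤ y2 → y2 ≤ y3 →
      (∃ x : ℤ, (x, y1) ∈ p) → (∃ x : ℤ, (x, y3) ∈ p) → ∃ x : ℤ, (x, y2) ∈ p) :
    FourConnected p :=
  intervals_imp_fourConnected_general p hH hadj hrows
end

section
/- Let p be an HV-convex polyomino, (x,y) a NE corner of p, y' = min{t : (x,t) ∈ p}, and x' = min{s : (s,y) ∈ p}. Then every cell (x'',y'') of p with x' ≤ x'' ≤ x and y' ≤ y'' ≤ y is connected to (x,y) by an inner path of p changing direction at most once. -/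
/-- every cell of the rectangle determined by a NE corner and the extremal
cells on its row and column is joined to the corner by an inner path changing direction
at most once. -/
theorem rectangle_cells_reachable (p : Set (ℤ × ℤ)) (hfin : p.Finite) (hne : p.Nonempty)
    (hconn : FourConnected p) (hH : HConvex p) (hV : VConvex p)
    (x y y' x' : ℤ) (hNE : NECorner p x y)
    (hy' : IsLeast {t : ℤ | (x, t) ∈ p} y') (hx' : IsLeast {s : ℤ | (s, y) ∈ p} x') :
    ∀ x'' y'' : ℤ, (x'', y'') ∈ p → x' ≤ x'' → x'' ≤ x → y' ≤ y'' → y'' ≤ y →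
      LPath p (x'', y'') (x, y) := by
  intro x'' y'' hmem hx1 hx2 hy1 hy2
  have hxy : (x, y) ∈ p := hNE.1
  have hxy' : (x, y'') ∈ p := hV x y' y'' y hy1 hy2 hy'.1 hxy
  left
  constructor
  · intro t ht1 ht2
    rw [min_eq_left hx2] at ht1
    rw [max_eq_right hx2] at ht2
    exact hH x'' t x y'' ht1 ht2 hmem hxy'
  · intro t ht1 ht2
    rw [min_eq_left hy2] at ht1
    rw [max_eq_right hy2] at ht2
    exact hV x y'' t y ht1 ht2 hxy' hxy
end

section
/- Let p be an HV-convex polyomino. Suppose (a,b) ∈ Z^2 is such that no cell of p lies strictly west of column a on row b (i.e., for all s < a, (s,b) ∉ p) but some cell (a', b') ∈ p satisfies a' < a and b' > b. Then no cell (x'',y'') of p satisfies x'' < a and y'' < b. -/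
theorem List.IsChain.exists_rel_mem_not_mem {α : Type*} {R : α → α → Prop} {A : Set α}
    {l : List α} {u v : α} (hl : l.IsChain R) (hu : l.head? = some u) (hv : l.getLast? = some v)
    (huA : u ∈ A) (hvA : v ∉ A) : ∃ c ∈ l, ∃ d ∈ l, R c d ∧ c ∈ A ∧ d ∉ A := by
  by_contra! hclosed
  have hl' : l.IsChain fun c d => R c d ∧ c ∈ l ∧ d ∈ l :=
    hl.imp_of_mem_imp fun c d hc hd hcd => ⟨hcd, hc, hd⟩
  refine hvA (hl'.induction (· ∈ A) l (fun c d ⟨hcd, hc, hd⟩ hcA => hclosed c hc d hd hcd hcA)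
    (fun hne => ?_) v (List.mem_of_getLast? hv))
  rwa [(List.head_eq_iff_head?_eq_some hne).mpr hu]

theorem FourConnected.exists_adj_mem_not_mem {p : Set (ℤ × ℤ)} (hconn : FourConnected p)
    {A : Set (ℤ × ℤ)} {u v : ℤ × ℤ} (hu : u ∈ p) (hv : v ∈ p) (huA : u ∈ A) (hvA : v ∉ A) :
    ∃ c ∈ p, ∃ d ∈ p, Adj c d ∧ c ∈ A ∧ d ∉ A := by
  obtain ⟨l, hhead, hlast, hlp, hchain⟩ := hconn u hu v hv
  obtain ⟨c, hc, d, hd, hcd, hcA, hdA⟩ :=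
    List.IsChain.exists_rel_mem_not_mem hchain hhead hlast huA hvA
  exact ⟨c, hlp c hc, d, hlp d hd, hcd, hcA, hdA⟩

/-- `hA` says that a step out of `A` goes east across column `a` or onto row `b`; the latter is
impossible inside `p`, so a cell where a path in `p` leaves `A` lies in column `a - 1`. -/
theorem FourConnected.exists_mem_col_pred {p : Set (ℤ × ℤ)} (hconn : FourConnected p)
    {a b : ℤ} (hrow : ∀ s : ℤ, s < a → (s, b) ∉ p) {A : Set (ℤ × ℤ)}
    (hA : ∀ c ∈ A, ∀ d, Adj c d → d ∉ A → c.1 < a ∧ (a ≤ d.1 ∨ d.2 = b))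
    {u v : ℤ × ℤ} (hu : u ∈ p) (hv : v ∈ p) (huA : u ∈ A) (hvA : v ∉ A) :
    ∃ c ∈ A, c ∈ p ∧ c.1 = a - 1 := by
  obtain ⟨c, hcp, d, hdp, hcd, hcA, hdA⟩ := hconn.exists_adj_mem_not_mem hu hv huA hvA
  refine ⟨c, hcA, hcp, ?_⟩
  obtain ⟨hca, hd⟩ := hA c hcA d hcd hdA
  have hd_col : d.2 = b → a ≤ d.1 := fun hdb => by
    by_contra! hda
    exact hrow d.1 hda (hdb ▸ hdp)
  unfold Adj at hcd
  omega

theorem southwest_quadrant_empty_general (p : Set (ℤ × ℤ))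
    (hconn : FourConnected p) (hV : VConvex p)
    (a b a' b' : ℤ) (hrow : ∀ s : ℤ, s < a → (s, b) ∉ p)
    (hcell : (a', b') ∈ p) (ha : a' < a) (hb : b < b') :
    ∀ x'' y'' : ℤ, (x'', y'') ∈ p → ¬(x'' < a ∧ y'' < b) := by
  rintro x'' y'' hmem ⟨hx, hy⟩
  obtain ⟨⟨_, y₁⟩, hy₁, hp₁, rfl⟩ :=
    hconn.exists_mem_col_pred hrow (A := {c | c.1 < a ∧ c.2 < b})
      (fun c hc d hcd hd => by simp only [Set.mem_ofPred_eq] at hc hd; unfold Adj at hcd; omega)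
      hmem hcell ⟨hx, hy⟩ (by simp only [Set.mem_ofPred_eq]; omega)
  obtain ⟨⟨_, y₂⟩, hy₂, hp₂, rfl⟩ :=
    hconn.exists_mem_col_pred hrow (A := {c | c.1 < a ∧ b < c.2})
      (fun c hc d hcd hd => by simp only [Set.mem_ofPred_eq] at hc hd; unfold Adj at hcd; omega)
      hcell hmem ⟨ha, hb⟩ (by simp only [Set.mem_ofPred_eq]; omega)
  exact hrow (a - 1) (by omega) (hV (a - 1) y₁ b y₂ hy₁.2.le hy₂.2.le hp₁ hp₂)

/-- if no cell of `p` lies due west of `(a, b)` on row `b`, but some cell of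
`p` lies strictly north-west of `(a, b)`, then the south-west quadrant of `(a, b)` is
disjoint from `p`. -/
theorem southwest_quadrant_empty (p : Set (ℤ × ℤ)) (hfin : p.Finite) (hne : p.Nonempty)
    (hconn : FourConnected p) (hH : HConvex p) (hV : VConvex p)
    (a b a' b' : ℤ) (hrow : ∀ s : ℤ, s < a → (s, b) ∉ p)
    (hcell : (a', b') ∈ p) (ha : a' < a) (hb : b < b') :
    ∀ x'' y'' : ℤ, (x'', y'') ∈ p → ¬(x'' < a ∧ y'' < b) :=
  southwest_quadrant_empty_general p hconn hV a b a' b' hrow hcell ha hb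
end
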